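/- Let T > k ≥ 1 be integers. Let V̂_ε be a T×T diagonal matrix with positive diagonal entries and V̂_y a T×T real symmetric matrix. Let 1+γ̂_1 ≥ ... ≥ 1+γ̂_T be the eigenvalues (with multiplicity) of A := V̂_ε^{-1/2} V̂_y V̂_ε^{-1/2}, assume γ̂_j > 0 for j = 1,...,k, let Û be a T×k matrix of orthonormal eigenvectors of A for the k largest eigenvalues, set Γ̂ = diag(γ̂_1,...,γ̂_k) and F̂ = V̂_ε^{1/2} Û Γ̂^{1/2}. Assume additionally that the diagonal entries of V̂_y equal the corresponding diagonal entries of F̂F̂' + V̂_ε. Then every diagonal entry of Ŝ := V̂_ε^{-1/2} M_{F̂,V̂_ε} (V̂_y − V̂_ε) M_{F̂,V̂_ε}' V̂_ε^{-1/2} is zero. -/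

import Mathlib

/-!
Write `V = P Pᵀ` with `P = V^{1/2}` and `F = P U G` with `G = Γ^{1/2}`. Then `F'V⁻¹F = GᵀG`, so
`M_{F,V} = P (1 - U Uᵀ) P⁻¹` and `Ŝ = (1 - U Uᵀ) W (1 - U Uᵀ)` with `W = P⁻¹ (V_y - V) P⁻ᵀ = A - 1`.
The columns of `U` are orthonormal eigenvectors of the symmetric `W` with eigenvalues `Γ`, so
projecting them out deflates `W`: `Ŝ = W - U Γ Uᵀ = P⁻¹ (V_y - V - F Fᵀ) P⁻ᵀ`. For diagonal `P`
the diagonal of this matrix is that of `V_y - V - F Fᵀ`, up to positive factors, and it vanishes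
by assumption.
-/

open Matrix Polynomial

namespace Matrix

theorem mul_eq_mul_diagonal_of_mulVec {n m R : Type*} [Fintype n] [Fintype m] [DecidableEq m]
    [CommRing R] {A : Matrix n n R} {U : Matrix n m R} {c : m → R}
    (h : ∀ j, A *ᵥ (fun t => U t j) = c j • fun t => U t j) : A * U = U * diagonal c := by
  ext t j
  rw [mul_diagonal, mul_comm]
  exact congrFun (h j) t

variable {n m R : Type*} [Fintype n] [Fintype m] [DecidableEq n] [DecidableEq m] [CommRing R]

noncomputable def glsAnnihilator (F : Matrix n m R) (V : Matrix n n R) : Matrix n n R :=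
  1 - F * (Fᵀ * V⁻¹ * F)⁻¹ * Fᵀ * V⁻¹

theorem glsAnnihilator_eq_conj {P : Matrix n n R} {G : Matrix m m R} {U : Matrix n m R}
    (hP : IsUnit P.det) (hG : IsUnit G.det) (hU : Uᵀ * U = 1) :
    glsAnnihilator (P * U * G) (P * Pᵀ) = P * (1 - U * Uᵀ) * P⁻¹ := by
  have hPt : IsUnit Pᵀ.det := isUnit_det_transpose P hP
  have hGt : IsUnit Gᵀ.det := isUnit_det_transpose G hG
  have hgram : (P * U * G)ᵀ * (P * Pᵀ)⁻¹ * (P * U * G) = Gᵀ * G := by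
    simp only [transpose_mul, mul_inv_rev, Matrix.mul_assoc, mul_nonsing_inv_cancel_left _ _ hPt,
      nonsing_inv_mul_cancel_left _ _ hP]
    rw [← Matrix.mul_assoc Uᵀ, hU, Matrix.one_mul]
  rw [glsAnnihilator, hgram]
  simp only [transpose_mul, mul_inv_rev, Matrix.mul_assoc, mul_nonsing_inv_cancel_left _ _ hG,
    nonsing_inv_mul_cancel_left _ _ hGt, mul_nonsing_inv_cancel_left _ _ hPt, Matrix.mul_sub,
    Matrix.sub_mul, Matrix.mul_one, mul_nonsing_inv _ hP]

theorem one_sub_mul_mul_one_sub_eq_sub_of_mul_eq {W : Matrix n n R} {U : Matrix n m R}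
    {Γ : Matrix m m R} (hW : Wᵀ = W) (hU : Uᵀ * U = 1) (hWU : W * U = U * Γ) :
    (1 - U * Uᵀ) * W * (1 - U * Uᵀ) = W - U * Γ * Uᵀ := by
  have hΓ : Uᵀ * W * U = Γ := by rw [Matrix.mul_assoc, hWU, ← Matrix.mul_assoc, hU, Matrix.one_mul]
  have hUW : Uᵀ * W = Γ * Uᵀ := by
    simpa only [transpose_mul, hW, ← hΓ, transpose_transpose, Matrix.mul_assoc]
      using congrArg transpose hWU
  have hleft : U * Uᵀ * W = U * Γ * Uᵀ := by rw [Matrix.mul_assoc, hUW, Matrix.mul_assoc]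
  have hright : W * (U * Uᵀ) = U * Γ * Uᵀ := by rw [← Matrix.mul_assoc, hWU]
  have hproj : U * Γ * Uᵀ * (U * Uᵀ) = U * Γ * Uᵀ := by
    rw [Matrix.mul_assoc, ← Matrix.mul_assoc Uᵀ, hU, Matrix.one_mul]
  simp only [Matrix.sub_mul, Matrix.mul_sub, Matrix.one_mul, Matrix.mul_one, hleft, hright, hproj]
  abel

theorem inv_mul_glsAnnihilator_mul_mul_transpose {P : Matrix n n R} {G : Matrix m m R}
    {U : Matrix n m R} {Y : Matrix n n R} (hP : IsUnit P.det) (hG : IsUnit G.det)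
    (hU : Uᵀ * U = 1) (hY : Yᵀ = Y) (hYU : P⁻¹ * Y * P⁻¹ᵀ * U = U * (G * Gᵀ)) :
    let M := glsAnnihilator (P * U * G) (P * Pᵀ)
    P⁻¹ * M * Y * Mᵀ * P⁻¹ᵀ = P⁻¹ * (Y - P * U * G * (P * U * G)ᵀ) * P⁻¹ᵀ := by
  intro M
  have hPM : P⁻¹ * M = (1 - U * Uᵀ) * P⁻¹ := by
    rw [show M = P * (1 - U * Uᵀ) * P⁻¹ from glsAnnihilator_eq_conj hP hG hU, Matrix.mul_assoc,
      nonsing_inv_mul_cancel_left _ _ hP]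
  have hMP : Mᵀ * P⁻¹ᵀ = P⁻¹ᵀ * (1 - U * Uᵀ) := by
    simpa only [transpose_mul, transpose_sub, transpose_one, transpose_transpose]
      using congrArg transpose hPM
  have hW : (P⁻¹ * Y * P⁻¹ᵀ)ᵀ = P⁻¹ * Y * P⁻¹ᵀ := by
    rw [transpose_mul, transpose_mul, hY, transpose_transpose, Matrix.mul_assoc]
  have hPtP : Pᵀ * P⁻¹ᵀ = 1 := by
    rw [transpose_nonsing_inv, mul_nonsing_inv _ (isUnit_det_transpose P hP)]
  calc P⁻¹ * M * Y * Mᵀ * P⁻¹ᵀ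
      = (1 - U * Uᵀ) * (P⁻¹ * Y * P⁻¹ᵀ) * (1 - U * Uᵀ) := by
        rw [Matrix.mul_assoc _ Mᵀ, hMP, hPM]; simp only [Matrix.mul_assoc]
    _ = P⁻¹ * Y * P⁻¹ᵀ - U * (G * Gᵀ) * Uᵀ := one_sub_mul_mul_one_sub_eq_sub_of_mul_eq hW hU hYU
    _ = P⁻¹ * (Y - P * U * G * (P * U * G)ᵀ) * P⁻¹ᵀ := by
        simp only [transpose_mul, Matrix.mul_sub, Matrix.sub_mul, Matrix.mul_assoc,
          nonsing_inv_mul_cancel_left _ _ hP]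
        rw [hPtP, Matrix.mul_one]

section Field

variable {K : Type*} [Field K]

theorem isUnit_det_diagonal_of_ne_zero {v : n → K} (hv : ∀ i, v i ≠ 0) :
    IsUnit (diagonal v).det := by
  rw [det_diagonal, isUnit_iff_ne_zero]
  exact Finset.prod_ne_zero_iff.mpr fun i _ => hv i

theorem inv_diagonal_of_ne_zero {v : n → K} (hv : ∀ i, v i ≠ 0) :
    (diagonal v)⁻¹ = diagonal fun i => (v i)⁻¹ :=
  inv_eq_left_inv <| by
    rw [diagonal_mul_diagonal, ← diagonal_one]
    exact congrArg diagonal (funext fun i => inv_mul_cancel₀ (hv i))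

end Field

end Matrix

theorem statement2_general (T k : ℕ) (hkT : k < T)
    (d : Fin T → ℝ) (hd : ∀ t, 0 < d t)
    (Vy : Matrix (Fin T) (Fin T) ℝ) (hVy : Vyᵀ = Vy)
    (γ : Fin T → ℝ)
    (hγpos : ∀ j : Fin T, (j : ℕ) < k → 0 < γ j)
    (A : Matrix (Fin T) (Fin T) ℝ)
    (hA : A = (Matrix.diagonal fun t => (Real.sqrt (d t))⁻¹) * Vy *
        (Matrix.diagonal fun t => (Real.sqrt (d t))⁻¹))
    (U : Matrix (Fin T) (Fin k) ℝ)
    (hUorth : Uᵀ * U = 1)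
    (hUeig : ∀ j : Fin k,
        A.mulVec (fun t => U t j) = (1 + γ (Fin.castLE hkT.le j)) • (fun t => U t j))
    (F : Matrix (Fin T) (Fin k) ℝ)
    (hF : F = (Matrix.diagonal fun t => Real.sqrt (d t)) * U *
        Matrix.diagonal (fun j : Fin k => Real.sqrt (γ (Fin.castLE hkT.le j))))
    (M : Matrix (Fin T) (Fin T) ℝ)
    (hM : M = 1 - F * (Fᵀ * (Matrix.diagonal d)⁻¹ * F)⁻¹ * Fᵀ * (Matrix.diagonal d)⁻¹)
    (hdiag : ∀ t : Fin T, Vy t t = (F * Fᵀ + Matrix.diagonal d) t t)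
    (S : Matrix (Fin T) (Fin T) ℝ)
    (hS : S = (Matrix.diagonal fun t => (Real.sqrt (d t))⁻¹) * M *
        (Vy - Matrix.diagonal d) * Mᵀ * (Matrix.diagonal fun t => (Real.sqrt (d t))⁻¹)) :
    ∀ t : Fin T, S t t = 0 := by
  set P : Matrix (Fin T) (Fin T) ℝ := diagonal fun t => √(d t)
  set g : Fin k → ℝ := fun j => γ (Fin.castLE hkT.le j)
  set G : Matrix (Fin k) (Fin k) ℝ := diagonal fun j => √(g j)
  have hg : ∀ j, 0 < g j := fun j => hγpos _ j.isLt
  have hP : IsUnit P.det := isUnit_det_diagonal_of_ne_zero fun t => (Real.sqrt_pos.2 (hd t)).ne'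
  have hG : IsUnit G.det := isUnit_det_diagonal_of_ne_zero fun j => (Real.sqrt_pos.2 (hg j)).ne'
  have hPinv : P⁻¹ = diagonal fun t => (√(d t))⁻¹ :=
    inv_diagonal_of_ne_zero fun t => (Real.sqrt_pos.2 (hd t)).ne'
  have hPT : Pᵀ = P := diagonal_transpose _
  have hPinvT : P⁻¹ᵀ = P⁻¹ := by rw [transpose_nonsing_inv, hPT]
  have hV : diagonal d = P * Pᵀ := by
    simp only [P, diagonal_transpose, diagonal_mul_diagonal, Real.mul_self_sqrt (hd _).le]
  have hGG : G * Gᵀ = diagonal g := by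
    simp only [G, diagonal_transpose, diagonal_mul_diagonal, Real.mul_self_sqrt (hg _).le]
  have hW : P⁻¹ * (Vy - diagonal d) * P⁻¹ᵀ = A - 1 := by
    rw [hPinvT, hA, ← hPinv, hV, hPT, Matrix.mul_sub, Matrix.sub_mul, ← Matrix.mul_assoc P⁻¹ P,
      nonsing_inv_mul _ hP, Matrix.one_mul, mul_nonsing_inv _ hP]
  have hWU : (A - 1) * U = U * diagonal g := by
    rw [Matrix.sub_mul, mul_eq_mul_diagonal_of_mulVec hUeig, Matrix.one_mul]
    ext t j
    simp only [Matrix.sub_apply, mul_diagonal, g]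
    ring
  have hY : (Vy - diagonal d)ᵀ = Vy - diagonal d := by rw [transpose_sub, hVy, diagonal_transpose]
  have hSF : S = P⁻¹ * (Vy - diagonal d - F * Fᵀ) * P⁻¹ := by
    have := inv_mul_glsAnnihilator_mul_mul_transpose hP hG hUorth hY (by rw [hW, hGG, hWU])
    rw [hPinvT, ← hV] at this
    rw [hS, hM, hF, ← hPinv, ← this]
    rfl
  intro t
  rw [hSF, hPinv, mul_diagonal, diagonal_mul, Matrix.sub_apply, Matrix.sub_apply, hdiag t,
    Matrix.add_apply, diagonal_apply_eq]
  ring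

theorem statement2 (T k : ℕ) (hk : 1 ≤ k) (hkT : k < T)
    (d : Fin T → ℝ) (hd : ∀ t, 0 < d t)
    (Vy : Matrix (Fin T) (Fin T) ℝ) (hVy : Vyᵀ = Vy)
    (γ : Fin T → ℝ) (hγ : Antitone γ)
    (hγpos : ∀ j : Fin T, (j : ℕ) < k → 0 < γ j)
    (A : Matrix (Fin T) (Fin T) ℝ)
    (hA : A = (Matrix.diagonal fun t => (Real.sqrt (d t))⁻¹) * Vy *
        (Matrix.diagonal fun t => (Real.sqrt (d t))⁻¹))
    (heig : A.charpoly = ∏ j : Fin T, (X - C (1 + γ j)))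
    (U : Matrix (Fin T) (Fin k) ℝ)
    (hUorth : Uᵀ * U = 1)
    (hUeig : ∀ j : Fin k,
        A.mulVec (fun t => U t j) = (1 + γ (Fin.castLE hkT.le j)) • (fun t => U t j))
    (F : Matrix (Fin T) (Fin k) ℝ)
    (hF : F = (Matrix.diagonal fun t => Real.sqrt (d t)) * U *
        Matrix.diagonal (fun j : Fin k => Real.sqrt (γ (Fin.castLE hkT.le j))))
    (M : Matrix (Fin T) (Fin T) ℝ)
    (hM : M = 1 - F * (Fᵀ * (Matrix.diagonal d)⁻¹ * F)⁻¹ * Fᵀ * (Matrix.diagonal d)⁻¹)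
    (hdiag : ∀ t : Fin T, Vy t t = (F * Fᵀ + Matrix.diagonal d) t t)
    (S : Matrix (Fin T) (Fin T) ℝ)
    (hS : S = (Matrix.diagonal fun t => (Real.sqrt (d t))⁻¹) * M *
        (Vy - Matrix.diagonal d) * Mᵀ * (Matrix.diagonal fun t => (Real.sqrt (d t))⁻¹)) :
    ∀ t : Fin T, S t t = 0 :=
  statement2_general T k hkT d hd Vy hVy γ hγpos A hA U hUorth hUeig F hF M hM hdiag S hS
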